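/- arXiv:2406.10444 — 3 statements merged into one kernel-verified Lean document; each statement's English description precedes it below -/
import Mathlib

section
/- In a treatment-control completely randomized experiment with N units, N₁ ≥ 1 treated and N₀ = N − N₁ ≥ 1 controls, the variance of the difference-in-means estimator under the randomization distribution equals Var(τ̂) = S²(1)/N₁ + S²(0)/N₀ − S²(τ)/N, where S²(1), S²(0) are the finite-population variances of the treated and control potential outcomes and S²(τ) is the finite-population variance of the individual treatment effects. -/
/-!
With `cᵢ = Yᵢ(1)/N₁ + Yᵢ(0)/N₀` the estimator is `τ̂ = ∑_{i ∈ A} cᵢ - ∑ᵢ Yᵢ(0)/N₀`, so up to a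
constant it is the total of `c` over a simple random sample `A` of size `N₁` drawn without
replacement. A fixed `m`-set lies in the sample with probability `N₁(N₁-1)⋯/(N(N-1)⋯)`
(`m` factors each); the cases `m = 1, 2` give the classical variance `N₁N₀/N · S²(c)` of a sample
total. After centring, the pointwise identity
`N₁N₀/N · (a/N₁ + b/N₀)² = a²/N₁ + b²/N₀ - (a - b)²/N` (valid as `N = N₁ + N₀`) turns this into
the stated formula.
-/

open Finset

/-- Expectation of `f` under the uniform distribution on the finite set `s`. -/
noncomputable def avgOver {α : Type*} (s : Finset α) (f : α → ℝ) : ℝ :=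
  (∑ a ∈ s, f a) / (s.card : ℝ)

/-- Variance of `f` under the uniform distribution on the finite set `s`. -/
noncomputable def varOver {α : Type*} (s : Finset α) (f : α → ℝ) : ℝ :=
  avgOver s fun a => (f a - avgOver s f) ^ 2

/-- Finite-population mean `Ȳ = N⁻¹ Σᵢ Yᵢ`. -/
noncomputable def fpMean {N : ℕ} (Y : Fin N → ℝ) : ℝ := (∑ i, Y i) / (N : ℝ)

/-- Finite-population variance `S² = (N-1)⁻¹ Σᵢ (Yᵢ - Ȳ)²`. -/
noncomputable def fpVar {N : ℕ} (Y : Fin N → ℝ) : ℝ :=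
  (∑ i, (Y i - fpMean Y) ^ 2) / ((N : ℝ) - 1)

/-- The set of treatment assignments: all subsets of the `N` units of size `N₁`. -/
def assignments (N N₁ : ℕ) : Finset (Finset (Fin N)) :=
  Finset.powersetCard N₁ Finset.univ

/-- Observed outcome `Yᵢ = Zᵢ Yᵢ(1) + (1 - Zᵢ) Yᵢ(0)`. -/
noncomputable def obsY {N : ℕ} (Y1 Y0 : Fin N → ℝ) (A : Finset (Fin N)) (i : Fin N) : ℝ :=
  if i ∈ A then Y1 i else Y0 i

/-- Treated-arm sample mean `Ŷ(1)`. -/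
noncomputable def yhat1 {N : ℕ} (Y1 Y0 : Fin N → ℝ) (N₁ : ℕ) (A : Finset (Fin N)) : ℝ :=
  (∑ i, if i ∈ A then obsY Y1 Y0 A i else 0) / (N₁ : ℝ)

/-- Control-arm sample mean `Ŷ(0)`. -/
noncomputable def yhat0 {N : ℕ} (Y1 Y0 : Fin N → ℝ) (N₀ : ℕ) (A : Finset (Fin N)) : ℝ :=
  (∑ i, if i ∉ A then obsY Y1 Y0 A i else 0) / (N₀ : ℝ)

/-- The difference-in-means estimator `τ̂ = Ŷ(1) - Ŷ(0)`. -/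
noncomputable def tauhat {N : ℕ} (Y1 Y0 : Fin N → ℝ) (N₁ N₀ : ℕ) (A : Finset (Fin N)) : ℝ :=
  yhat1 Y1 Y0 N₁ A - yhat0 Y1 Y0 N₀ A

namespace Finset

variable {ι : Type*} [Fintype ι] [DecidableEq ι]

theorem card_filter_powersetCard_univ_superset_mul_descFactorial (k : ℕ) (s : Finset ι) :
    #{A ∈ powersetCard k univ | s ⊆ A} * (Fintype.card ι).descFactorial #s
      = (Fintype.card ι).choose k * k.descFactorial #s := by
  rcases le_or_gt #s k with hsk | hks
  · rw [card_filter_powersetCard_subset s univ k (subset_univ s) hsk, card_univ,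
      Nat.descFactorial_eq_factorial_mul_choose, Nat.descFactorial_eq_factorial_mul_choose,
      mul_left_comm ((Fintype.card ι).choose k), Nat.choose_mul hsk]
    ring
  · have hempty : {A ∈ powersetCard k (univ : Finset ι) | s ⊆ A} = ∅ :=
      filter_eq_empty_iff.mpr fun A hA hsA =>
        (card_le_card hsA).not_gt ((mem_powersetCard.mp hA).2 ▸ hks)
    rw [hempty, Nat.descFactorial_eq_zero_iff_lt.mpr hks]
    simp

theorem cast_card_filter_powersetCard_univ_mem (k : ℕ) (i : ι) :
    (#{A ∈ powersetCard k univ | i ∈ A} : ℝ)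
      = (Fintype.card ι).choose k * (k / Fintype.card ι) := by
  have hN : (Fintype.card ι : ℝ) ≠ 0 := Nat.cast_ne_zero.mpr (Fintype.card_pos_iff.mpr ⟨i⟩).ne'
  have := card_filter_powersetCard_univ_superset_mul_descFactorial k {i}
  simp only [singleton_subset_iff, card_singleton, Nat.descFactorial_one] at this
  rw [mul_div_assoc', eq_div_iff hN]
  exact_mod_cast this

theorem cast_card_filter_powersetCard_univ_mem_and_mem (k : ℕ) {i j : ι} (hij : i ≠ j) :
    (#{A ∈ powersetCard k univ | i ∈ A ∧ j ∈ A} : ℝ)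
      = (Fintype.card ι).choose k * (k * (k - 1) / (Fintype.card ι * (Fintype.card ι - 1))) := by
  have hN : (Fintype.card ι : ℝ) * (Fintype.card ι - 1) ≠ 0 := by
    rw [← Nat.cast_descFactorial_two, Nat.cast_ne_zero, Ne, Nat.descFactorial_eq_zero_iff_lt,
      not_lt]
    simpa [hij] using card_le_univ {i, j}
  have := card_filter_powersetCard_univ_superset_mul_descFactorial k {i, j}
  simp only [insert_subset_iff, singleton_subset_iff, card_pair hij] at this
  rw [mul_div_assoc', eq_div_iff hN, ← Nat.cast_descFactorial_two, ← Nat.cast_descFactorial_two]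
  exact_mod_cast this

theorem sum_sum_mem_eq_sum_sum_filter_mem {M : Type*} [AddCommMonoid M]
    (𝒜 : Finset (Finset ι)) (F : Finset ι → ι → M) :
    ∑ A ∈ 𝒜, ∑ i ∈ A, F A i = ∑ i, ∑ A ∈ 𝒜 with i ∈ A, F A i :=
  sum_comm' fun A i => by simp [and_comm]

theorem sum_powersetCard_univ_sum (k : ℕ) (c : ι → ℝ) :
    ∑ A ∈ powersetCard k univ, ∑ i ∈ A, c i
      = (Fintype.card ι).choose k * (k / Fintype.card ι * ∑ i, c i) := by
  simp only [sum_sum_mem_eq_sum_sum_filter_mem, sum_const, nsmul_eq_mul,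
    cast_card_filter_powersetCard_univ_mem, mul_sum]
  ring_nf

theorem sum_powersetCard_univ_sq_sum (k : ℕ) (c : ι → ℝ) :
    ∑ A ∈ powersetCard k univ, (∑ i ∈ A, c i) ^ 2
      = (Fintype.card ι).choose k * (k / Fintype.card ι * ∑ i, c i ^ 2
        + k * (k - 1) / (Fintype.card ι * (Fintype.card ι - 1))
          * ((∑ i, c i) ^ 2 - ∑ i, c i ^ 2)) := by
  have hoff : ∑ i, ∑ j ∈ univ.erase i, c i * c j = (∑ i, c i) ^ 2 - ∑ i, c i ^ 2 := by
    simp only [← mul_sum, sum_erase_eq_sub (mem_univ _), sum_sub_distrib, ← sum_mul, sq]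
  have hrow : ∀ i, ∑ j, (#{A ∈ powersetCard k univ | i ∈ A ∧ j ∈ A} : ℝ) * (c i * c j)
      = (Fintype.card ι).choose k * (k / Fintype.card ι * c i ^ 2
        + k * (k - 1) / (Fintype.card ι * (Fintype.card ι - 1))
          * ∑ j ∈ univ.erase i, c i * c j) := by
    intro i
    rw [← add_sum_erase _ _ (mem_univ i), mul_sum, mul_add, mul_sum]
    congr 1
    · simp only [and_self, cast_card_filter_powersetCard_univ_mem]
      ring
    · refine sum_congr rfl fun j hj => ?_
      rw [cast_card_filter_powersetCard_univ_mem_and_mem k (ne_of_mem_erase hj).symm]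
      ring
  calc ∑ A ∈ powersetCard k univ, (∑ i ∈ A, c i) ^ 2
      = ∑ i, ∑ j, (#{A ∈ powersetCard k univ | i ∈ A ∧ j ∈ A} : ℝ) * (c i * c j) := by
        simp only [sq, sum_mul_sum, sum_sum_mem_eq_sum_sum_filter_mem, filter_filter, sum_const,
          nsmul_eq_mul]
    _ = _ := by
        rw [sum_congr rfl fun i _ => hrow i, ← mul_sum, sum_add_distrib, ← mul_sum, ← mul_sum,
          hoff]

end Finset

theorem avgOver_sub_const {α : Type*} {s : Finset α} (hs : s.Nonempty) (f : α → ℝ) (K : ℝ) :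
    avgOver s (fun a => f a - K) = avgOver s f - K := by
  have : (#s : ℝ) ≠ 0 := Nat.cast_ne_zero.mpr hs.card_ne_zero
  simp only [avgOver, sum_sub_distrib, sum_const, nsmul_eq_mul]
  field_simp

theorem varOver_sub_const {α : Type*} (s : Finset α) (f : α → ℝ) (K : ℝ) :
    varOver s (fun a => f a - K) = varOver s f := by
  rcases s.eq_empty_or_nonempty with rfl | hs
  · simp [varOver, avgOver]
  · simp only [varOver, avgOver_sub_const hs, sub_sub_sub_cancel_right]

theorem varOver_eq_avgOver_sq_sub_sq {α : Type*} (s : Finset α) (f : α → ℝ) :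
    varOver s f = avgOver s (fun a => f a ^ 2) - avgOver s f ^ 2 := by
  rcases s.eq_empty_or_nonempty with rfl | hs
  · simp [varOver, avgOver]
  have : (#s : ℝ) ≠ 0 := Nat.cast_ne_zero.mpr hs.card_ne_zero
  simp only [varOver, avgOver, sub_sq, sum_add_distrib, sum_sub_distrib, ← sum_mul, ← mul_sum,
    sum_const, nsmul_eq_mul]
  field_simp
  ring

theorem fpVar_eq_sum_sq_sub {N : ℕ} (Y : Fin N → ℝ) :
    fpVar Y = (∑ i, Y i ^ 2 - (∑ i, Y i) ^ 2 / N) / (N - 1) := by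
  rcases Nat.eq_zero_or_pos N with rfl | hN
  · simp [fpVar]
  have : (N : ℝ) ≠ 0 := by positivity
  simp only [fpVar, fpMean, sub_sq, sum_add_distrib, sum_sub_distrib, ← sum_mul, ← mul_sum,
    sum_const, card_univ, Fintype.card_fin, nsmul_eq_mul]
  field_simp
  ring

theorem varOver_powersetCard_sum {N k : ℕ} (hk : k ≤ N) (hN : 2 ≤ N) (c : Fin N → ℝ) :
    varOver (powersetCard k univ) (fun A => ∑ i ∈ A, c i) = k * (N - k) / N * fpVar c := by
  have hC : ((N.choose k : ℕ) : ℝ) ≠ 0 := Nat.cast_ne_zero.mpr (Nat.choose_pos hk).ne'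
  have hN₀ : (N : ℝ) ≠ 0 := by positivity
  have hN₁ : (N : ℝ) - 1 ≠ 0 := by
    have : (2 : ℝ) ≤ N := by exact_mod_cast hN
    linarith
  rw [varOver_eq_avgOver_sq_sub_sq, avgOver, avgOver, sum_powersetCard_univ_sum,
    sum_powersetCard_univ_sq_sum, card_powersetCard, card_univ, fpVar_eq_sum_sq_sub]
  simp only [Fintype.card_fin]
  field_simp
  ring

theorem yhat1_eq_sum_div {N : ℕ} (Y1 Y0 : Fin N → ℝ) (N₁ : ℕ) (A : Finset (Fin N)) :
    yhat1 Y1 Y0 N₁ A = (∑ i ∈ A, Y1 i) / N₁ := by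
  rw [yhat1, ← sum_filter, filter_mem_eq_inter, univ_inter]
  exact congrArg (· / _) (sum_congr rfl fun i hi => if_pos hi)

theorem yhat0_eq_sum_compl_div {N : ℕ} (Y1 Y0 : Fin N → ℝ) (N₀ : ℕ) (A : Finset (Fin N)) :
    yhat0 Y1 Y0 N₀ A = (∑ i ∈ Aᶜ, Y0 i) / N₀ := by
  rw [yhat0, ← sum_filter, filter_not, filter_mem_eq_inter, univ_inter, ← compl_eq_univ_sdiff]
  exact congrArg (· / _) (sum_congr rfl fun i hi => if_neg (mem_compl.mp hi))

theorem tauhat_eq {N : ℕ} (Y1 Y0 : Fin N → ℝ) (N₁ N₀ : ℕ) (A : Finset (Fin N)) :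
    tauhat Y1 Y0 N₁ N₀ A = ∑ i ∈ A, (Y1 i / N₁ + Y0 i / N₀) - (∑ i, Y0 i) / N₀ := by
  rw [tauhat, yhat1_eq_sum_div, yhat0_eq_sum_compl_div, ← sum_compl_add_sum A, sum_add_distrib,
    ← sum_div, ← sum_div]
  ring

theorem mul_fpVar_div_add_div {N N₁ N₀ : ℕ} (hadd : N₁ + N₀ = N) (h1 : N₁ ≠ 0) (h0 : N₀ ≠ 0)
    (Y1 Y0 : Fin N → ℝ) :
    N₁ * N₀ / N * fpVar (fun i => Y1 i / N₁ + Y0 i / N₀)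
      = fpVar Y1 / N₁ + fpVar Y0 / N₀ - fpVar (fun i => Y1 i - Y0 i) / N := by
  have hmean : ∀ i, Y1 i / N₁ + Y0 i / N₀ - fpMean (fun i => Y1 i / N₁ + Y0 i / N₀)
      = (Y1 i - fpMean Y1) / N₁ + (Y0 i - fpMean Y0) / N₀ := by
    intro i
    simp only [fpMean, sum_add_distrib, ← sum_div]
    ring
  have hmean' : ∀ i, Y1 i - Y0 i - fpMean (fun i => Y1 i - Y0 i)
      = (Y1 i - fpMean Y1) - (Y0 i - fpMean Y0) := by
    intro i
    simp only [fpMean, sum_sub_distrib]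
    ring
  have key : ∀ a b : ℝ, N₁ * N₀ / N * (a / N₁ + b / N₀) ^ 2
      = a ^ 2 / N₁ + b ^ 2 / N₀ - (a - b) ^ 2 / N := by
    intro a b
    rw [← hadd]
    push_cast
    field_simp
    ring
  simp only [fpVar, hmean, hmean', mul_div_assoc', mul_sum, key, sum_sub_distrib, sum_add_distrib,
    ← sum_div]
  ring

/-- Neyman's variance formula: under complete randomization,
`Var(τ̂) = S²(1)/N₁ + S²(0)/N₀ - S²(τ)/N`. -/
theorem diff_in_means_variance (N N₁ N₀ : ℕ) (hadd : N₁ + N₀ = N)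
    (h1 : 1 ≤ N₁) (h0 : 1 ≤ N₀) (Y1 Y0 : Fin N → ℝ) :
    varOver (assignments N N₁) (tauhat Y1 Y0 N₁ N₀)
      = fpVar Y1 / (N₁ : ℝ) + fpVar Y0 / (N₀ : ℝ)
        - fpVar (fun i => Y1 i - Y0 i) / (N : ℝ) := by
  have htau : tauhat Y1 Y0 N₁ N₀
      = fun A => ∑ i ∈ A, (Y1 i / N₁ + Y0 i / N₀) - (∑ i, Y0 i) / N₀ :=
    funext (tauhat_eq Y1 Y0 N₁ N₀)
  rw [htau, varOver_sub_const, assignments, varOver_powersetCard_sum (by omega) (by omega),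
    ← mul_fpVar_div_add_div hadd (by omega) (by omega)]
  congr 2
  rw [← hadd]
  push_cast
  ring
end

section
/- In a multi-level completely randomized experiment with N units and Q treatment arms of sizes N₁,…,N_Q (each N_q ≥ 1, Σ_q N_q = N), and a contrast matrix F ∈ ℝ^{Q×H} with Fᵀ1_Q = 0, the estimator τ̂ = Fᵀ Ŷ(·) is unbiased for τ = Fᵀ Ȳ(·), its covariance matrix equals Var(τ̂) = Fᵀ diag(S(q,q)/N_q)_{q=1}^Q F − N⁻¹ Fᵀ S F, and if moreover N_q ≥ 2 for all q, the variance estimator V̂ = Fᵀ diag(Ŝ(q,q)/N_q)_{q=1}^Q F satisfies E[V̂] − Var(τ̂) = N⁻¹ Fᵀ S F, which is positive semidefinite, so V̂ is conservative in expectation. -/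
/-!
The uniform law on assignments with arm sizes `N_q` is invariant under permutations of the
units, which pins down the first two moments of the arm indicators:
`E 1{Z_i = q} = N_q / N` and, for `i ≠ j`,
`E 1{Z_i = q} 1{Z_j = q'} = N_q (N_{q'} - δ_{qq'}) / (N (N - 1))`.
With `e_i(q) = Y_i(q) - Ȳ(q)`, which sum to zero over `i`, we have
`Ŷ(q) - Ȳ(q) = N_q⁻¹ Σ_{i : Z_i = q} e_i(q)` and
`(N_q - 1) Ŝ(q,q) = Σ_{i : Z_i = q} e_i(q)² - N_q (Ŷ(q) - Ȳ(q))²`, so these moments give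
`E Ŷ(q) = Ȳ(q)`, `Cov(Ŷ(q), Ŷ(q')) = δ_{qq'} S(q,q) / N_q - S(q,q') / N` and `E Ŝ(q,q) = S(q,q)`;
the claims about `τ̂` and `V̂` follow by linearity. Finally `N⁻¹ Fᵀ S F` is a Gram matrix,
hence positive semidefinite.
-/

open Finset

/-- Covariance of `f` and `g` under the uniform distribution on the finite set `s`. -/
noncomputable def covOver {α : Type*} (s : Finset α) (f g : α → ℝ) : ℝ :=
  avgOver s fun a => (f a - avgOver s f) * (g a - avgOver s g)

/-- The set of treatment assignments in a multi-level completely randomized experiment: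
vectors `z : {1,…,N} → {1,…,Q}` with exactly `Nq q` units assigned to arm `q`. -/
def assignSet (N Q : ℕ) (Nq : Fin Q → ℕ) : Finset (Fin N → Fin Q) :=
  Finset.univ.filter fun z => ∀ q, (Finset.univ.filter fun i => z i = q).card = Nq q

/-- Observed outcome `Yᵢ = Σ_q Yᵢ(q) 1{Zᵢ = q}`. -/
noncomputable def obsQ {N Q : ℕ} (Y : Fin N → Fin Q → ℝ) (z : Fin N → Fin Q) (i : Fin N) : ℝ :=
  ∑ q, if z i = q then Y i q else 0

/-- Arm-wise sample mean `Ŷ(q) = N_q⁻¹ Σᵢ Yᵢ 1{Zᵢ = q}`. -/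
noncomputable def yhatQ {N Q : ℕ} (Y : Fin N → Fin Q → ℝ) (Nq : Fin Q → ℕ)
    (z : Fin N → Fin Q) (q : Fin Q) : ℝ :=
  (∑ i, if z i = q then obsQ Y z i else 0) / (Nq q : ℝ)

/-- Finite-population mean `Ȳ(q)`. -/
noncomputable def ybarQ {N Q : ℕ} (Y : Fin N → Fin Q → ℝ) (q : Fin Q) : ℝ :=
  (∑ i, Y i q) / (N : ℝ)

/-- Finite-population covariance
`S(q,q') = (N-1)⁻¹ Σᵢ (Yᵢ(q)-Ȳ(q))(Yᵢ(q')-Ȳ(q'))`. -/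
noncomputable def fpCovQ {N Q : ℕ} (Y : Fin N → Fin Q → ℝ) (q q' : Fin Q) : ℝ :=
  (∑ i, (Y i q - ybarQ Y q) * (Y i q' - ybarQ Y q')) / ((N : ℝ) - 1)

/-- The average effect `τ = Fᵀ Ȳ(·)`. -/
noncomputable def tauQ {N Q H : ℕ} (Y : Fin N → Fin Q → ℝ) (F : Fin Q → Fin H → ℝ)
    (h : Fin H) : ℝ :=
  ∑ q, F q h * ybarQ Y q

/-- The estimator `τ̂ = Fᵀ Ŷ(·)`. -/
noncomputable def tauhatQ {N Q H : ℕ} (Y : Fin N → Fin Q → ℝ) (Nq : Fin Q → ℕ)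
    (F : Fin Q → Fin H → ℝ) (z : Fin N → Fin Q) (h : Fin H) : ℝ :=
  ∑ q, F q h * yhatQ Y Nq z q

/-- Arm-wise sample variance `Ŝ(q,q) = (N_q - 1)⁻¹ Σᵢ (Yᵢ - Ŷ(q))² 1{Zᵢ = q}`. -/
noncomputable def shatQ {N Q : ℕ} (Y : Fin N → Fin Q → ℝ) (Nq : Fin Q → ℕ)
    (z : Fin N → Fin Q) (q : Fin Q) : ℝ :=
  (∑ i, if z i = q then (obsQ Y z i - yhatQ Y Nq z q) ^ 2 else 0) / ((Nq q : ℝ) - 1)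

/-- The variance estimator `V̂ = Fᵀ diag(Ŝ(q,q)/N_q) F`, entrywise. -/
noncomputable def vhatQ {N Q H : ℕ} (Y : Fin N → Fin Q → ℝ) (Nq : Fin Q → ℕ)
    (F : Fin Q → Fin H → ℝ) (z : Fin N → Fin Q) (h h' : Fin H) : ℝ :=
  ∑ q, F q h * F q h' * shatQ Y Nq z q / (Nq q : ℝ)

open scoped BigOperators

lemma avgOver_eq_expect {α : Type*} (s : Finset α) (f : α → ℝ) :
    avgOver s f = 𝔼 a ∈ s, f a :=
  (expect_eq_sum_div_card s f).symm

lemma sum_sum_mul_eq_of_offDiag_const {ι : Type*} [Fintype ι] [DecidableEq ι]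
    {T : ι → ι → ℝ} {a b : ℝ} (hdiag : ∀ i, T i i = a) (hoff : ∀ i j, i ≠ j → T i j = b)
    (c d : ι → ℝ) :
    ∑ i, ∑ j, T i j * (c i * d j) = (a - b) * ∑ i, c i * d i + b * (∑ i, c i) * ∑ j, d j := by
  have hT : ∀ i j, T i j = (a - b) * (if i = j then 1 else 0) + b := by
    intro i j
    split_ifs with h
    · subst h; rw [hdiag]; ring
    · rw [hoff i j h]; ring
  simp only [hT, add_mul, sum_add_distrib, mul_assoc, ← mul_sum, boole_mul, sum_ite_eq,
    mem_univ, if_true, sum_mul_sum]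

section Assignments

variable {N Q : ℕ} {Nq : Fin Q → ℕ}

lemma apply_le_of_sum_eq (hsum : ∑ q, Nq q = N) (q : Fin Q) : Nq q ≤ N :=
  hsum ▸ single_le_sum (fun _ _ => Nat.zero_le _) (mem_univ q)

lemma mem_assignSet {z : Fin N → Fin Q} :
    z ∈ assignSet N Q Nq ↔ ∀ q, #{i | z i = q} = Nq q := by
  simp [assignSet]

lemma assignSet_nonempty (hsum : ∑ q, Nq q = N) : (assignSet N Q Nq).Nonempty := by
  have hcard : Fintype.card ((q : Fin Q) × Fin (Nq q)) = N := by simp [hsum]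
  let e := (Fintype.equivFinOfCardEq hcard).symm
  refine ⟨fun i => (e i).1, mem_assignSet.2 fun q => ?_⟩
  rw [card_equiv e (t := {s | s.1 = q}) (by simp), card_filter, Fintype.sum_sigma]
  simp [apply_ite]

lemma comp_perm_mem_assignSet (σ : Equiv.Perm (Fin N)) {z : Fin N → Fin Q}
    (hz : z ∈ assignSet N Q Nq) : z ∘ σ ∈ assignSet N Q Nq := by
  rw [mem_assignSet] at hz ⊢
  intro q
  rw [← hz q]
  exact card_equiv σ (by simp)

lemma expect_assignSet_comp_perm (σ : Equiv.Perm (Fin N)) (g : (Fin N → Fin Q) → ℝ) :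
    𝔼 z ∈ assignSet N Q Nq, g (z ∘ σ) = 𝔼 z ∈ assignSet N Q Nq, g z :=
  expect_nbij' (· ∘ σ) (· ∘ σ.symm) (fun _ hz => comp_perm_mem_assignSet σ hz)
    (fun _ hz => comp_perm_mem_assignSet σ.symm hz) (fun z _ => by ext; simp)
    (fun z _ => by ext; simp) (fun _ _ => rfl)

lemma sum_ite_eq_of_mem_assignSet {z : Fin N → Fin Q} (hz : z ∈ assignSet N Q Nq) (q : Fin Q) :
    ∑ i, (if z i = q then 1 else 0 : ℝ) = Nq q := by
  rw [sum_boole, mem_assignSet.1 hz q]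

lemma expect_ite_apply (hsum : ∑ q, Nq q = N) (i : Fin N) (q : Fin Q) :
    𝔼 z ∈ assignSet N Q Nq, (if z i = q then 1 else 0 : ℝ) = Nq q / N := by
  have hexch : ∀ j, 𝔼 z ∈ assignSet N Q Nq, (if z j = q then 1 else 0 : ℝ)
      = 𝔼 z ∈ assignSet N Q Nq, (if z i = q then 1 else 0 : ℝ) := fun j => by
    simpa using expect_assignSet_comp_perm (Equiv.swap i j) (fun z => if z i = q then 1 else 0)
  have htotal : ∑ j, 𝔼 z ∈ assignSet N Q Nq, (if z j = q then 1 else 0 : ℝ) = Nq q := by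
    rw [← expect_sum_comm, expect_congr rfl fun z hz => sum_ite_eq_of_mem_assignSet hz q,
      expect_const (assignSet_nonempty hsum)]
  simp only [hexch, sum_const, card_univ, Fintype.card_fin, nsmul_eq_mul] at htotal
  rw [← htotal, mul_div_cancel_left₀ _ (by simpa using i.pos.ne')]

lemma expect_ite_mul_ite_of_ne (hsum : ∑ q, Nq q = N) {i j : Fin N} (hij : i ≠ j)
    (q q' : Fin Q) :
    𝔼 z ∈ assignSet N Q Nq, (if z i = q then 1 else 0 : ℝ) * (if z j = q' then 1 else 0)
      = Nq q * (Nq q' - if q = q' then 1 else 0) / (N * (N - 1)) := by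
  -- `∑_{k ≠ i} 1{z k = q'} = N_{q'} - 1{z i = q'}`, and its `N - 1` terms have equal means.
  have hexch : ∀ k ∈ univ.erase i,
      𝔼 z ∈ assignSet N Q Nq, (if z i = q then 1 else 0 : ℝ) * (if z k = q' then 1 else 0)
      = 𝔼 z ∈ assignSet N Q Nq, (if z i = q then 1 else 0 : ℝ) * (if z j = q' then 1 else 0) :=
    fun k hk => by
      have hik : i ≠ k := (ne_of_mem_erase hk).symm
      simpa [Equiv.swap_apply_of_ne_of_ne hij hik] using expect_assignSet_comp_perm
        (Equiv.swap j k) (fun z => (if z i = q then 1 else 0 : ℝ) * (if z j = q' then 1 else 0))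
  have hrest : ∀ z ∈ assignSet N Q Nq, ∑ k ∈ univ.erase i,
      (if z i = q then 1 else 0 : ℝ) * (if z k = q' then 1 else 0)
      = (Nq q' - if q = q' then 1 else 0) * (if z i = q then 1 else 0) := fun z hz => by
    rw [← mul_sum, sum_erase_eq_sub (mem_univ i), sum_ite_eq_of_mem_assignSet hz q']
    split_ifs <;> simp_all
  have htotal := expect_sum_comm (assignSet N Q Nq) (univ.erase i)
    fun z k => (if z i = q then 1 else 0 : ℝ) * (if z k = q' then 1 else 0)
  rw [expect_congr rfl hrest, ← mul_expect, expect_ite_apply hsum, sum_congr rfl hexch,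
    sum_const, card_erase_of_mem (mem_univ i), card_univ, Fintype.card_fin, nsmul_eq_mul] at htotal
  have hN : (2 : ℝ) ≤ N := by exact_mod_cast (show 2 ≤ N by omega)
  rw [Nat.cast_sub (by omega), Nat.cast_one] at htotal
  rw [eq_div_iff (by nlinarith)]
  field_simp [show (N : ℝ) ≠ 0 by positivity] at htotal
  linear_combination -htotal

end Assignments

section ArmSums

variable {N Q : ℕ} {Nq : Fin Q → ℕ}

def armSum (z : Fin N → Fin Q) (q : Fin Q) (c : Fin N → ℝ) : ℝ :=
  ∑ i, (if z i = q then 1 else 0) * c i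

lemma expect_armSum (hsum : ∑ q, Nq q = N) (q : Fin Q) (c : Fin N → ℝ) :
    𝔼 z ∈ assignSet N Q Nq, armSum z q c = Nq q * (∑ i, c i) / N := by
  simp only [armSum, expect_sum_comm, ← expect_mul, expect_ite_apply hsum, mul_sum, sum_div]
  exact sum_congr rfl fun i _ => by ring

lemma expect_armSum_mul_armSum (hsum : ∑ q, Nq q = N) (q q' : Fin Q) {c : Fin N → ℝ}
    (hc : ∑ i, c i = 0) (d : Fin N → ℝ) :
    𝔼 z ∈ assignSet N Q Nq, armSum z q c * armSum z q' d
      = Nq q * ((if q = q' then (N : ℝ) else 0) - Nq q') / N * ((∑ i, c i * d i) / (N - 1)) := by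
  -- For `N ≤ 1` the off-diagonal moments are not available, but a centred `c` vanishes.
  rcases le_or_gt N 1 with hN | hN
  · have : Subsingleton (Fin N) := Fin.subsingleton_iff_le_one.2 hN
    have hc0 : ∀ i, c i = 0 := fun i => by rwa [Fintype.sum_subsingleton c i] at hc
    simp [armSum, hc0]
  have hexpand : ∀ z, armSum z q c * armSum z q' d = ∑ i, ∑ j,
      (if z i = q then 1 else 0 : ℝ) * (if z j = q' then 1 else 0) * (c i * d j) := fun z => by
    simp only [armSum, sum_mul_sum]
    exact sum_congr rfl fun i _ => sum_congr rfl fun j _ => by ring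
  have hdiag : ∀ i, 𝔼 z ∈ assignSet N Q Nq,
      (if z i = q then 1 else 0 : ℝ) * (if z i = q' then 1 else 0)
      = if q = q' then (Nq q / N : ℝ) else 0 := fun i => by
    split_ifs with hqq
    · subst hqq
      rw [← expect_ite_apply hsum i q]
      exact expect_congr rfl fun z _ => by split_ifs <;> simp
    · exact expect_eq_zero fun z _ => by split_ifs <;> simp_all
  simp only [hexpand, expect_sum_comm, ← expect_mul]
  rw [sum_sum_mul_eq_of_offDiag_const hdiag fun i j hij => expect_ite_mul_ite_of_ne hsum hij q q',
    hc]
  have hN1 : (N : ℝ) - 1 ≠ 0 := sub_ne_zero.2 (by exact_mod_cast hN.ne')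
  split_ifs <;> field_simp <;> ring

end ArmSums

section Estimators

variable {N Q H : ℕ} {Nq : Fin Q → ℕ} (Y : Fin N → Fin Q → ℝ)

noncomputable def devQ (q : Fin Q) (i : Fin N) : ℝ :=
  Y i q - ybarQ Y q

lemma sum_devQ (q : Fin Q) : ∑ i, devQ Y q i = 0 := by
  rcases Nat.eq_zero_or_pos N with rfl | hN
  · simp
  · simp [devQ, ybarQ, sum_sub_distrib, mul_div_cancel₀ _ (by positivity : (N : ℝ) ≠ 0)]

lemma fpCovQ_eq_sum_devQ (q q' : Fin Q) :
    fpCovQ Y q q' = (∑ i, devQ Y q i * devQ Y q' i) / (N - 1) :=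
  rfl

lemma obsQ_eq (z : Fin N → Fin Q) (i : Fin N) : obsQ Y z i = Y i (z i) := by
  simp [obsQ]

lemma yhatQ_eq {z : Fin N → Fin Q} (hz : z ∈ assignSet N Q Nq) {q : Fin Q} (hq : Nq q ≠ 0) :
    yhatQ Y Nq z q = ybarQ Y q + armSum z q (devQ Y q) / Nq q := by
  have hobs : ∀ i, (if z i = q then obsQ Y z i else 0)
      = (if z i = q then 1 else 0) * ybarQ Y q + (if z i = q then 1 else 0) * devQ Y q i := by
    intro i
    split_ifs with h <;> simp [obsQ_eq, h, devQ]
  rw [yhatQ, sum_congr rfl fun i _ => hobs i, sum_add_distrib, ← sum_mul,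
    sum_ite_eq_of_mem_assignSet hz, add_div, mul_div_cancel_left₀ _ (by exact_mod_cast hq)]
  rfl

lemma shatQ_eq {z : Fin N → Fin Q} (hz : z ∈ assignSet N Q Nq) {q : Fin Q} (hq : Nq q ≠ 0) :
    shatQ Y Nq z q = (armSum z q (fun i => devQ Y q i ^ 2)
      - armSum z q (devQ Y q) ^ 2 / Nq q) / (Nq q - 1) := by
  set A := armSum z q (devQ Y q)
  have hterm : ∀ i, (if z i = q then (obsQ Y z i - yhatQ Y Nq z q) ^ 2 else 0)
      = (if z i = q then 1 else 0) * devQ Y q i ^ 2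
        - 2 * (A / Nq q) * ((if z i = q then 1 else 0) * devQ Y q i)
        + (A / Nq q) ^ 2 * (if z i = q then 1 else 0) := by
    intro i
    split_ifs with h
    · rw [obsQ_eq, yhatQ_eq Y hz hq, h, devQ]; ring
    · simp
  rw [shatQ, sum_congr rfl fun i _ => hterm i, sum_add_distrib, sum_sub_distrib, ← mul_sum,
    ← mul_sum, sum_ite_eq_of_mem_assignSet hz]
  congr 1
  simp only [armSum, A]
  field_simp
  ring

end Estimators

section Moments

variable {N Q H : ℕ} {Nq : Fin Q → ℕ} (Y : Fin N → Fin Q → ℝ) (F : Fin Q → Fin H → ℝ)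

lemma expect_yhatQ (hsum : ∑ q, Nq q = N) {q : Fin Q} (hq : 0 < Nq q) :
    𝔼 z ∈ assignSet N Q Nq, yhatQ Y Nq z q = ybarQ Y q := by
  rw [expect_congr rfl fun z hz => yhatQ_eq Y hz hq.ne', expect_add_distrib,
    expect_const (assignSet_nonempty hsum), ← expect_div, expect_armSum hsum, sum_devQ]
  simp

lemma expect_yhatQ_sub_mul_yhatQ_sub (hsum : ∑ q, Nq q = N) {q q' : Fin Q} (hq : 0 < Nq q)
    (hq' : 0 < Nq q') :
    𝔼 z ∈ assignSet N Q Nq, (yhatQ Y Nq z q - ybarQ Y q) * (yhatQ Y Nq z q' - ybarQ Y q')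
      = (if q = q' then fpCovQ Y q q / Nq q else 0) - fpCovQ Y q q' / N := by
  rw [expect_congr rfl fun z hz => by
    rw [yhatQ_eq Y hz hq.ne', yhatQ_eq Y hz hq'.ne', add_sub_cancel_left, add_sub_cancel_left,
      div_mul_div_comm]]
  rw [← expect_div, expect_armSum_mul_armSum hsum q q' (sum_devQ Y q), ← fpCovQ_eq_sum_devQ]
  have hN : (N : ℝ) ≠ 0 := Nat.cast_ne_zero.2 (hq.trans_le (apply_le_of_sum_eq hsum q)).ne'
  have : (Nq q : ℝ) ≠ 0 := Nat.cast_ne_zero.2 hq.ne'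
  have : (Nq q' : ℝ) ≠ 0 := Nat.cast_ne_zero.2 hq'.ne'
  split_ifs with hqq
  · subst hqq; field_simp
  · field_simp; ring

lemma expect_tauhatQ (hsum : ∑ q, Nq q = N) (hq : ∀ q, 0 < Nq q) (h : Fin H) :
    𝔼 z ∈ assignSet N Q Nq, tauhatQ Y Nq F z h = tauQ Y F h := by
  simp only [tauhatQ, expect_sum_comm, ← mul_expect, expect_yhatQ Y hsum (hq _), tauQ]

lemma covOver_tauhatQ (hsum : ∑ q, Nq q = N) (hq : ∀ q, 0 < Nq q) (h h' : Fin H) :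
    covOver (assignSet N Q Nq) (fun z => tauhatQ Y Nq F z h) (fun z => tauhatQ Y Nq F z h')
      = (∑ q, F q h * F q h' * fpCovQ Y q q / Nq q)
        - (∑ q, ∑ q', F q h * fpCovQ Y q q' * F q' h') / N := by
  have hprod : ∀ z, (tauhatQ Y Nq F z h - tauQ Y F h) * (tauhatQ Y Nq F z h' - tauQ Y F h')
      = ∑ q, ∑ q', F q h * F q' h' * ((yhatQ Y Nq z q - ybarQ Y q) * (yhatQ Y Nq z q' - ybarQ Y q'))
      := fun z => by
    simp only [tauhatQ, tauQ, ← sum_sub_distrib, ← mul_sub, sum_mul_sum]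
    exact sum_congr rfl fun q _ => sum_congr rfl fun q' _ => by ring
  simp only [covOver, avgOver_eq_expect, expect_tauhatQ Y F hsum hq, hprod, expect_sum_comm,
    ← mul_expect, expect_yhatQ_sub_mul_yhatQ_sub Y hsum (hq _) (hq _)]
  simp only [mul_sub, mul_ite, mul_zero, sum_sub_distrib, sum_ite_eq, mem_univ, if_true, sum_div]
  congr 1
  · exact sum_congr rfl fun q _ => by ring
  · exact sum_congr rfl fun q _ => sum_congr rfl fun q' _ => by ring

lemma expect_shatQ (hsum : ∑ q, Nq q = N) {q : Fin Q} (hq : 2 ≤ Nq q) :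
    𝔼 z ∈ assignSet N Q Nq, shatQ Y Nq z q = fpCovQ Y q q := by
  rw [expect_congr rfl fun z hz => by rw [shatQ_eq Y hz (by omega), sq (armSum z q _)],
    ← expect_div, expect_sub_distrib, ← expect_div, expect_armSum hsum,
    expect_armSum_mul_armSum hsum q q (sum_devQ Y q), if_pos rfl, fpCovQ_eq_sum_devQ]
  have hN : (2 : ℝ) ≤ N := by exact_mod_cast hq.trans (apply_le_of_sum_eq hsum q)
  have hq : (2 : ℝ) ≤ Nq q := by exact_mod_cast hq
  have : (N : ℝ) - 1 ≠ 0 := by linarith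
  have : (Nq q : ℝ) - 1 ≠ 0 := by linarith
  field_simp
  ring

lemma expect_vhatQ (hsum : ∑ q, Nq q = N) (hq : ∀ q, 2 ≤ Nq q) (h h' : Fin H) :
    𝔼 z ∈ assignSet N Q Nq, vhatQ Y Nq F z h h' = ∑ q, F q h * F q h' * fpCovQ Y q q / Nq q := by
  simp only [vhatQ, expect_sum_comm, mul_div_right_comm _ (shatQ _ _ _ _), ← mul_expect,
    expect_shatQ Y hsum (hq _)]
  exact sum_congr rfl fun q _ => by ring

end Moments

lemma posSemidef_contrast_fpCovQ {N Q H : ℕ} (Y : Fin N → Fin Q → ℝ) (F : Fin Q → Fin H → ℝ) :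
    (Matrix.of fun h h' : Fin H =>
      (∑ q, ∑ q', F q h * fpCovQ Y q q' * F q' h') / N).PosSemidef := by
  let B : Matrix (Fin N) (Fin H) ℝ := Matrix.of fun i h => ∑ q, F q h * devQ Y q i
  have hgram : (Matrix.of fun h h' : Fin H => (∑ q, ∑ q', F q h * fpCovQ Y q q' * F q' h') / N)
      = ((N : ℝ) * (N - 1))⁻¹ • (B.conjTranspose * B) := by
    ext h h'
    simp only [Matrix.of_apply, Matrix.smul_apply, Matrix.mul_apply, Matrix.conjTranspose_apply,
      star_trivial, B, fpCovQ_eq_sum_devQ, smul_eq_mul, mul_inv, mul_sum, sum_mul, sum_div]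
    rw [sum_comm_cycle]
    refine sum_congr rfl fun i _ => ?_
    rw [sum_comm]
    exact sum_congr rfl fun q' _ => sum_congr rfl fun q _ => by ring
  rw [hgram]
  refine (Matrix.posSemidef_conjTranspose_mul_self B).smul (inv_nonneg.2 ?_)
  rcases N with _ | N
  · simp
  · push_cast; nlinarith

theorem multilevel_cre_neyman_general (N Q H : ℕ) (Nq : Fin Q → ℕ) (hq : ∀ q, 1 ≤ Nq q)
    (hsum : ∑ q, Nq q = N) (Y : Fin N → Fin Q → ℝ) (F : Fin Q → Fin H → ℝ) :
    (∀ h, avgOver (assignSet N Q Nq) (fun z => tauhatQ Y Nq F z h) = tauQ Y F h)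
    ∧ (∀ h h', covOver (assignSet N Q Nq)
          (fun z => tauhatQ Y Nq F z h) (fun z => tauhatQ Y Nq F z h')
        = (∑ q, F q h * F q h' * fpCovQ Y q q / (Nq q : ℝ))
          - (∑ q, ∑ q', F q h * fpCovQ Y q q' * F q' h') / (N : ℝ))
    ∧ ((∀ q, 2 ≤ Nq q) →
        (∀ h h', avgOver (assignSet N Q Nq) (fun z => vhatQ Y Nq F z h h')
            - covOver (assignSet N Q Nq)
                (fun z => tauhatQ Y Nq F z h) (fun z => tauhatQ Y Nq F z h')
          = (∑ q, ∑ q', F q h * fpCovQ Y q q' * F q' h') / (N : ℝ))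
        ∧ (Matrix.of fun h h' : Fin H =>
            (∑ q, ∑ q', F q h * fpCovQ Y q q' * F q' h') / (N : ℝ)).PosSemidef) := by
  refine ⟨fun h => ?_, covOver_tauhatQ Y F hsum hq, fun hq₂ => ⟨fun h h' => ?_,
    posSemidef_contrast_fpCovQ Y F⟩⟩
  · rw [avgOver_eq_expect, expect_tauhatQ Y F hsum hq]
  · rw [avgOver_eq_expect, expect_vhatQ Y F hsum hq₂, covOver_tauhatQ Y F hsum hq, sub_sub_cancel]

/-- In a multi-level completely randomized experiment with a contrast matrix `F`
(`Fᵀ 1_Q = 0`), the estimator `τ̂ = Fᵀ Ŷ(·)` is unbiased for `τ = Fᵀ Ȳ(·)`, its covariance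
matrix equals `Fᵀ diag(S(q,q)/N_q) F - N⁻¹ Fᵀ S F`, and if all `N_q ≥ 2`, the variance
estimator `V̂` satisfies `E[V̂] - Var(τ̂) = N⁻¹ Fᵀ S F`, which is positive semidefinite. -/
theorem multilevel_cre_neyman (N Q H : ℕ) (Nq : Fin Q → ℕ) (hq : ∀ q, 1 ≤ Nq q)
    (hsum : ∑ q, Nq q = N) (Y : Fin N → Fin Q → ℝ) (F : Fin Q → Fin H → ℝ)
    (hF : ∀ h, ∑ q, F q h = 0) :
    (∀ h, avgOver (assignSet N Q Nq) (fun z => tauhatQ Y Nq F z h) = tauQ Y F h)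
    ∧ (∀ h h', covOver (assignSet N Q Nq)
          (fun z => tauhatQ Y Nq F z h) (fun z => tauhatQ Y Nq F z h')
        = (∑ q, F q h * F q h' * fpCovQ Y q q / (Nq q : ℝ))
          - (∑ q, ∑ q', F q h * fpCovQ Y q q' * F q' h') / (N : ℝ))
    ∧ ((∀ q, 2 ≤ Nq q) →
        (∀ h h', avgOver (assignSet N Q Nq) (fun z => vhatQ Y Nq F z h h')
            - covOver (assignSet N Q Nq)
                (fun z => tauhatQ Y Nq F z h) (fun z => tauhatQ Y Nq F z h')
          = (∑ q, ∑ q', F q h * fpCovQ Y q q' * F q' h') / (N : ℝ))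
        ∧ (Matrix.of fun h h' : Fin H =>
            (∑ q, ∑ q', F q h * fpCovQ Y q q' * F q' h') / (N : ℝ)).PosSemidef) :=
  multilevel_cre_neyman_general N Q H Nq hq hsum Y F
end

section
/- (Conservativeness of the matched-pairs variance estimator.) In a matched-pairs experiment with n ≥ 2 pairs, where within each pair k exactly one of the two units is assigned to treatment uniformly at random, independently across pairs, the variance estimator V̂_M = (n(n−1))⁻¹ Σ_{k=1}^n (τ̂_[k] − τ̂_M)² satisfies E[V̂_M] ≥ Var(τ̂_M), where τ̂_[k] is the treated-minus-control difference of observed outcomes in pair k and τ̂_M = n⁻¹ Σ_{k=1}^n τ̂_[k]. -/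
open Finset

/-- In pair `k`, the treated-minus-control difference of observed outcomes: if the coin `c k`
is heads, unit `a` of the pair is treated and unit `b` is control, and vice versa. -/
noncomputable def pairDiff {n : ℕ} (Ya1 Ya0 Yb1 Yb0 : Fin n → ℝ) (c : Fin n → Bool)
    (k : Fin n) : ℝ :=
  if c k then Ya1 k - Yb0 k else Yb1 k - Ya0 k

/-- The matched-pairs estimator `τ̂_M = n⁻¹ Σ_k τ̂_[k]`. -/
noncomputable def tauhatM {n : ℕ} (Ya1 Ya0 Yb1 Yb0 : Fin n → ℝ) (c : Fin n → Bool) : ℝ :=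
  (∑ k, pairDiff Ya1 Ya0 Yb1 Yb0 c k) / (n : ℝ)

/-- The matched-pairs variance estimator `V̂_M = (n(n-1))⁻¹ Σ_k (τ̂_[k] - τ̂_M)²`. -/
noncomputable def vhatM {n : ℕ} (Ya1 Ya0 Yb1 Yb0 : Fin n → ℝ) (c : Fin n → Bool) : ℝ :=
  (∑ k, (pairDiff Ya1 Ya0 Yb1 Yb0 c k - tauhatM Ya1 Ya0 Yb1 Yb0 c) ^ 2)
    / ((n : ℝ) * ((n : ℝ) - 1))

noncomputable def sgn (b : Bool) : ℝ := if b then 1 else -1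

lemma sgn_sq (b : Bool) : sgn b * sgn b = 1 := by cases b <;> simp [sgn]

lemma sum_sgn {n : ℕ} (k : Fin n) : ∑ c : Fin n → Bool, sgn (c k) = 0 := by
  have h : ∀ c : Fin n → Bool, sgn (c k) = ∏ i, (fun i b => if i = k then sgn b else 1) i (c i) := by
    intro c
    rw [Finset.prod_eq_single k (by intro b _ hb; simp [hb]) (by simp)]
    simp
  simp_rw [h]
  have key := Finset.prod_univ_sum (fun _ : Fin n => (univ : Finset Bool))
    (fun i b => if i = k then sgn b else 1)
  simp only [← Fintype.piFinset_univ] at key ⊢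
  rw [← key]
  apply Finset.prod_eq_zero (Finset.mem_univ k)
  simp [sgn]

lemma sum_sgn_mul {n : ℕ} (k l : Fin n) :
    ∑ c : Fin n → Bool, sgn (c k) * sgn (c l) = if k = l then (2:ℝ)^n else 0 := by
  rcases eq_or_ne k l with rfl | hkl
  · simp_rw [sgn_sq]
    simp [Finset.card_univ]
  · rw [if_neg hkl]
    have h : ∀ c : Fin n → Bool, sgn (c k) * sgn (c l)
        = ∏ i, (fun i b => (if i = k then sgn b else 1) * (if i = l then sgn b else 1)) i (c i) := by
      intro c
      rw [Finset.prod_mul_distrib]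
      rw [Finset.prod_eq_single k (by intro b _ hb; simp [hb]) (by simp),
          Finset.prod_eq_single l (by intro b _ hb; simp [hb]) (by simp)]
      simp [hkl]
    simp_rw [h]
    have key := Finset.prod_univ_sum (fun _ : Fin n => (univ : Finset Bool))
      (fun i b => (if i = k then sgn b else 1) * (if i = l then sgn b else 1))
    simp only [← Fintype.piFinset_univ] at key ⊢
    rw [← key]
    apply Finset.prod_eq_zero (Finset.mem_univ k)
    simp [sgn, if_neg hkl]

set_option maxHeartbeats 1000000 in
/-- Conservativeness of the matched-pairs variance estimator: over the uniform distribution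
on the `2^n` equiprobable assignments (independent fair coins across pairs),
`E[V̂_M] ≥ Var(τ̂_M)`. -/
theorem matched_pairs_variance_estimator_conservative (n : ℕ) (hn : 2 ≤ n)
    (Ya1 Ya0 Yb1 Yb0 : Fin n → ℝ) :
    avgOver (Finset.univ : Finset (Fin n → Bool)) (vhatM Ya1 Ya0 Yb1 Yb0)
      ≥ varOver (Finset.univ : Finset (Fin n → Bool)) (tauhatM Ya1 Ya0 Yb1 Yb0) := by
  have hnR : (2:ℝ) ≤ (n:ℝ) := by exact_mod_cast hn
  have hn0 : (n : ℝ) ≠ 0 := by positivity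
  have hn1 : (n : ℝ) - 1 ≠ 0 := by linarith
  set μ : Fin n → ℝ := fun k => ((Ya1 k - Yb0 k) + (Yb1 k - Ya0 k)) / 2 with hμ
  set ε : Fin n → ℝ := fun k => ((Ya1 k - Yb0 k) - (Yb1 k - Ya0 k)) / 2 with hε
  have hD : ∀ (c : Fin n → Bool) k, pairDiff Ya1 Ya0 Yb1 Yb0 c k = μ k + ε k * sgn (c k) := by
    intro c k
    unfold pairDiff sgn
    cases hc : c k <;> simp [hμ, hε] <;> ring
  set T : (Fin n → Bool) → ℝ := fun c => ∑ k, ε k * sgn (c k) with hT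
  have htau : ∀ c, tauhatM Ya1 Ya0 Yb1 Yb0 c = (∑ k, μ k) / n + T c / n := by
    intro c
    unfold tauhatM
    rw [Finset.sum_congr rfl fun k _ => hD c k, Finset.sum_add_distrib]
    ring
  have hcard : ((Finset.univ : Finset (Fin n → Bool)).card : ℝ) = 2 ^ n := by
    simp [Finset.card_univ]
  have hcard2 : ((Fintype.card (Fin n → Bool) : ℕ) : ℝ) = 2 ^ n := by simp
  have hpow : (2:ℝ) ^ n ≠ 0 := by positivity
  -- sum of T
  have hsT : ∑ c : Fin n → Bool, T c = 0 := by
    rw [hT, Finset.sum_comm]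
    simp_rw [← Finset.mul_sum, sum_sgn]
    simp
  -- sum of T^2
  have hsT2 : ∑ c : Fin n → Bool, (T c) ^ 2 = 2 ^ n * ∑ k, (ε k) ^ 2 := by
    have expand : ∀ c, (T c) ^ 2 = ∑ k, ∑ l, (ε k * ε l) * (sgn (c k) * sgn (c l)) := by
      intro c
      rw [hT, sq, Finset.sum_mul_sum]
      apply Finset.sum_congr rfl; intro k _
      apply Finset.sum_congr rfl; intro l _
      ring
    rw [Finset.sum_congr rfl fun c _ => expand c, Finset.sum_comm]
    have h1 : ∀ k : Fin n, (∑ c : Fin n → Bool, ∑ l, (ε k * ε l) * (sgn (c k) * sgn (c l)))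
        = 2 ^ n * (ε k) ^ 2 := by
      intro k
      rw [Finset.sum_comm]
      have h2 : ∀ l : Fin n, (∑ c : Fin n → Bool, (ε k * ε l) * (sgn (c k) * sgn (c l)))
          = if k = l then 2 ^ n * (ε k)^2 else 0 := by
        intro l
        rw [← Finset.mul_sum, sum_sgn_mul]
        rcases eq_or_ne k l with rfl | hkl
        · simp; ring
        · simp [hkl]
      rw [Finset.sum_congr rfl fun l _ => h2 l]
      simp
    rw [Finset.sum_congr rfl fun k _ => h1 k, ← Finset.mul_sum]
  -- sum of D_k^2 over c
  have hsD2 : ∑ c : Fin n → Bool, ∑ k, (pairDiff Ya1 Ya0 Yb1 Yb0 c k) ^ 2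
      = 2 ^ n * ((∑ k, (μ k) ^ 2) + ∑ k, (ε k) ^ 2) := by
    rw [Finset.sum_comm]
    have h1 : ∀ k : Fin n, ∑ c : Fin n → Bool, (pairDiff Ya1 Ya0 Yb1 Yb0 c k) ^ 2
        = 2 ^ n * ((μ k) ^ 2 + (ε k) ^ 2) := by
      intro k
      have h2 : ∀ c : Fin n → Bool, (pairDiff Ya1 Ya0 Yb1 Yb0 c k) ^ 2
          = (μ k ^ 2 + ε k ^ 2) + (2 * μ k * ε k) * sgn (c k) := by
        intro c
        rw [hD]
        nlinarith [sgn_sq (c k)]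
      rw [Finset.sum_congr rfl fun c _ => h2 c, Finset.sum_add_distrib, Finset.sum_const,
        ← Finset.mul_sum, sum_sgn, Finset.card_univ, nsmul_eq_mul, hcard2]
      ring
    rw [Finset.sum_congr rfl fun k _ => h1 k, ← Finset.mul_sum, Finset.sum_add_distrib]
  have hsTdiv : ∑ c : Fin n → Bool, T c / (n:ℝ) = 0 := by
    rw [← Finset.sum_div, hsT, zero_div]
  have hsT2div : ∑ c : Fin n → Bool, (T c) ^ 2 / (n:ℝ) ^ 2
      = 2 ^ n * (∑ k, (ε k) ^ 2) / (n:ℝ) ^ 2 := by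
    rw [← Finset.sum_div, hsT2]
  -- sum of tauhat over c
  have hstau : ∑ c : Fin n → Bool, tauhatM Ya1 Ya0 Yb1 Yb0 c = 2 ^ n * ((∑ k, μ k) / n) := by
    rw [Finset.sum_congr rfl fun c _ => htau c, Finset.sum_add_distrib, Finset.sum_const,
      hsTdiv, Finset.card_univ, nsmul_eq_mul, hcard2]
    simp
  -- sum of tauhat^2 over c
  have hstau2 : ∑ c : Fin n → Bool, (tauhatM Ya1 Ya0 Yb1 Yb0 c) ^ 2
      = 2 ^ n * (((∑ k, μ k) / n) ^ 2 + (∑ k, (ε k) ^ 2) / n ^ 2) := by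
    have h2 : ∀ c, (tauhatM Ya1 Ya0 Yb1 Yb0 c) ^ 2
        = (((∑ k, μ k) / n) ^ 2 + (2 * (∑ k, μ k) / n ^ 2) * T c) + (T c) ^ 2 / n ^ 2 := by
      intro c
      rw [htau]
      field_simp
      ring
    rw [Finset.sum_congr rfl fun c _ => h2 c, Finset.sum_add_distrib, Finset.sum_add_distrib,
      Finset.sum_const, ← Finset.mul_sum, hsT, hsT2div,
      Finset.card_univ, nsmul_eq_mul, hcard2]
    field_simp
    ring
  -- pointwise identity for vhat numerator
  have hpt : ∀ c, ∑ k, (pairDiff Ya1 Ya0 Yb1 Yb0 c k - tauhatM Ya1 Ya0 Yb1 Yb0 c) ^ 2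
      = (∑ k, (pairDiff Ya1 Ya0 Yb1 Yb0 c k) ^ 2) - n * (tauhatM Ya1 Ya0 Yb1 Yb0 c) ^ 2 := by
    intro c
    have hSD : ∑ k, pairDiff Ya1 Ya0 Yb1 Yb0 c k = n * tauhatM Ya1 Ya0 Yb1 Yb0 c := by
      unfold tauhatM; field_simp
    have expand : ∀ k, (pairDiff Ya1 Ya0 Yb1 Yb0 c k - tauhatM Ya1 Ya0 Yb1 Yb0 c) ^ 2
        = ((pairDiff Ya1 Ya0 Yb1 Yb0 c k) ^ 2
          - 2 * tauhatM Ya1 Ya0 Yb1 Yb0 c * pairDiff Ya1 Ya0 Yb1 Yb0 c k)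
          + (tauhatM Ya1 Ya0 Yb1 Yb0 c) ^ 2 := by intro k; ring
    rw [Finset.sum_congr rfl fun k _ => expand k, Finset.sum_add_distrib,
      Finset.sum_sub_distrib, ← Finset.mul_sum, hSD, Finset.sum_const, Finset.card_univ,
      Fintype.card_fin, nsmul_eq_mul]
    ring
  -- compute avg vhat
  have havg : avgOver (Finset.univ : Finset (Fin n → Bool)) (vhatM Ya1 Ya0 Yb1 Yb0)
      = (((∑ k, (μ k)^2) + ∑ k, (ε k)^2)
          - n * (((∑ k, μ k) / n) ^ 2 + (∑ k, (ε k) ^ 2) / n ^ 2))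
        / ((n : ℝ) * ((n : ℝ) - 1)) := by
    unfold avgOver vhatM
    rw [Finset.sum_congr rfl fun c (_ : c ∈ Finset.univ) => by rw [hpt c],
      ← Finset.sum_div, Finset.sum_sub_distrib, hsD2, ← Finset.mul_sum, hstau2, hcard]
    field_simp
  -- compute varOver
  have hvar : varOver (Finset.univ : Finset (Fin n → Bool)) (tauhatM Ya1 Ya0 Yb1 Yb0)
      = (∑ k, (ε k) ^ 2) / n ^ 2 := by
    unfold varOver
    have hmean : avgOver (Finset.univ : Finset (Fin n → Bool)) (tauhatM Ya1 Ya0 Yb1 Yb0)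
        = (∑ k, μ k) / n := by
      unfold avgOver
      rw [hstau, hcard]
      field_simp
    rw [hmean]
    unfold avgOver
    have h3 : ∀ c : Fin n → Bool, (tauhatM Ya1 Ya0 Yb1 Yb0 c - (∑ k, μ k) / n) ^ 2
        = (T c) ^ 2 / n ^ 2 := by
      intro c; rw [htau]; ring
    rw [Finset.sum_congr rfl fun c (_ : c ∈ Finset.univ) => h3 c,
      ← Finset.sum_div, hsT2, hcard]
    field_simp
  rw [ge_iff_le, havg, hvar]
  -- final inequality
  have hCS : (∑ k, μ k) ^ 2 ≤ (n : ℝ) * ∑ k, (μ k) ^ 2 := by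
    have := sq_sum_le_card_mul_sum_sq (s := (Finset.univ : Finset (Fin n))) (f := μ)
    simpa [Finset.card_univ] using this
  set a := ∑ k, μ k
  set b := ∑ k, (μ k) ^ 2
  set cc := ∑ k, (ε k) ^ 2
  have hccpos : 0 ≤ cc := by positivity
  have hkey : (b + cc) - (n:ℝ) * ((a / n) ^ 2 + cc / n ^ 2)
      = (b - a ^ 2 / n) + cc * ((n:ℝ) - 1) / n := by
    field_simp
    ring
  rw [hkey, div_le_div_iff₀ (by positivity) (by nlinarith)]
  have hexp : ((b - a ^ 2 / n) + cc * ((n:ℝ) - 1) / n) * (n:ℝ) ^ 2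
      = ((n:ℝ) * b - a ^ 2 + cc * ((n:ℝ) - 1)) * n := by
    field_simp
  rw [hexp]
  nlinarith [hCS, hnR, hccpos]
end
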